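/- For any word, any interval of positions of length ℓ contains at most 3ℓ/2 Lroots of runs. -/

import Mathlib

open List

universe u

/-- The factor `w[i..j]` of a word (inclusive positions). -/
def factor {α : Type u} (w : List α) (i j : ℕ) : List α := (w.drop i).take (j - i + 1)

/-- `p` is a period length of the word `u`. -/
def HasPeriodLen {α : Type u} (u : List α) (p : ℕ) : Prop :=
  1 ≤ p ∧ ∀ k, k + p < u.length → u[k]? = u[k + p]?

/-- The smallest period of a word. -/
noncomputable def minPeriod {α : Type u} (u : List α) : ℕ := sInf {p | HasPeriodLen u p}

/-- `[i..j]` is a run in `w`: the factor is periodic with smallest period at most half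
its length, and the periodicity extends neither to the left nor to the right. -/
def IsRun {α : Type u} (w : List α) (i j : ℕ) : Prop :=
  i < j ∧ j < w.length ∧
  2 * minPeriod (factor w i j) ≤ j - i + 1 ∧
  (0 < i → minPeriod (factor w i j) < minPeriod (factor w (i - 1) j)) ∧
  (j + 1 < w.length → minPeriod (factor w i j) < minPeriod (factor w i (j + 1)))
/-- `listPow u n` is the `n`-th power `u^n` of the word `u`. -/
def listPow {α : Type u} (v : List α) : ℕ → List α
  | 0 => []
  | n + 1 => v ++ listPow v n

/-- A word is primitive if it is not a proper power. -/
def Primitive {α : Type u} (v : List α) : Prop :=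
  v ≠ [] ∧ ∀ r n, 2 ≤ n → v ≠ listPow r n

/-- `c` is a conjugate (rotation) of `v`. -/
def IsConjWord {α : Type u} (v c : List α) : Prop := ∃ s t, v = s ++ t ∧ c = t ++ s
/-- `u` is a Lyndon word for the alphabet order `r`: nonempty and lexicographically
smaller than each of its proper nonempty suffixes. -/
def IsLyndonWrt {α : Type u} (r : α → α → Prop) (v : List α) : Prop :=
  v ≠ [] ∧ ∀ t, t <:+ v → t ≠ v → t ≠ [] → List.Lex r v t

/-- The run `[i..j]` in `w` is governed by the order `r`: either the run ends the word,
or the letter following the run is `r`-smaller than the letter one period before it. -/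
noncomputable def UseOrd {α : Type u} (r : α → α → Prop) (w : List α) (i j : ℕ) : Prop :=
  j + 1 = w.length ∨
    ∃ a b, w[j + 1]? = some a ∧ w[j + 1 - minPeriod (factor w i j)]? = some b ∧ r a b

/-- `v` is the Lyndon root (w.r.t. the order `r`) of the run `[i..j]` of `w`:
the Lyndon conjugate of its root. -/
def LyndonRootOf {α : Type u} (r : α → α → Prop) (w : List α) (i j : ℕ) (v : List α) : Prop :=
  IsLyndonWrt r v ∧ IsConjWord (factor w i (i + minPeriod (factor w i j) - 1)) v

/-- `[a..b]` is the Lroot of the run `[i..j]` of `w`: the interval of the first occurrence,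
inside the run, of the Lyndon root of the run, taken with respect to the lexicographic order
determined by the letter following the run. -/
noncomputable def IsLroot {α : Type u} [LinearOrder α] (w : List α) (i j a b : ℕ) : Prop :=
  IsRun w i j ∧
  ∃ v, ((UseOrd (· < ·) w i j ∧ LyndonRootOf (· < ·) w i j v) ∨
        (¬ UseOrd (· < ·) w i j ∧ LyndonRootOf (· > ·) w i j v)) ∧
    i ≤ a ∧ b ≤ j ∧ b + 1 = a + v.length ∧ factor w a b = v ∧
    ∀ a', i ≤ a' → a' < a → factor w a' (a' + v.length - 1) ≠ v

/-!
Send each run to the starting position of its Lroot. Two runs with the same order cannot have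
Lroots starting at the same position: the longer Lyndon root would meet, at the end of the shorter
run, a mismatch with its own shift by the shorter period, oriented the wrong way for a Lyndon word.
So a position is hit at most twice, and if runs of both orders hit it, their Lyndon roots share a
prefix that is Lyndon for `<` and for `>`, hence a single letter `c`; the position then starts a
maximal block `cc⋯`. Such positions are never adjacent, so they fill at most half of the interval,
and the number of runs is at most `ℓ + ℓ / 2`.
-/

namespace Finset

theorem two_mul_card_add_card_le {A B I : Finset ℕ} (hA : A ⊆ I) (hB : B ⊆ I)
    (hAB : ∀ x ∈ A ∩ B, x + 1 ∈ I ∧ x + 1 ∉ A ∩ B) : 2 * (A.card + B.card) ≤ 3 * I.card := by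
  have hdisj : Disjoint (A ∩ B) ((A ∩ B).image (· + 1)) := by
    refine disjoint_left.2 fun x hx hx' => ?_
    obtain ⟨y, hy, rfl⟩ := mem_image.1 hx'
    exact (hAB y hy).2 hx
  have hsub : A ∩ B ∪ (A ∩ B).image (· + 1) ⊆ I :=
    union_subset (inter_subset_left.trans hA)
      (image_subset_iff.2 fun x hx => (hAB x hx).1)
  have hinter := card_le_card hsub
  rw [card_union_of_disjoint hdisj, card_image_of_injective _ (add_left_injective 1)] at hinter
  have := card_union_add_card_inter A B
  have := card_le_card (union_subset hA hB)
  omega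

theorem card_eq_card_image_filter_add_card_image_filter_not {β γ : Type*} [DecidableEq γ]
    {F : Finset β} (p : β → Prop) [DecidablePred p] {g : β → γ}
    (hg : ∀ u ∈ F, ∀ v ∈ F, (p u ↔ p v) → g u = g v → u = v) :
    F.card = ({x ∈ F | p x}.image g).card + ({x ∈ F | ¬ p x}.image g).card := by
  rw [card_image_of_injOn, card_image_of_injOn, card_filter_add_card_filter_not]
  all_goals
    intro u hu v hv
    simp only [coe_filter, Set.mem_ofPred_eq] at hu hv
    exact hg u hu.1 v hv.1 (by simp only [hu.2, hv.2])

end Finset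

section

variable {α : Type u}

theorem List.Lex.exists_rel_of_length_le {r : α → α → Prop} {u t : List α} (h : List.Lex r u t)
    (hlen : t.length ≤ u.length) :
    ∃ (d : ℕ) (x y : α), (∀ k < d, u[k]? = t[k]?) ∧ u[d]? = some x ∧ t[d]? = some y ∧ r x y := by
  induction h with
  | nil => simp at hlen
  | @rel a₁ _ a₂ _ h => exact ⟨0, a₁, a₂, by simp, rfl, rfl, h⟩
  | cons _ ih =>
    obtain ⟨d, x, y, hagree, hx, hy, hxy⟩ := ih (by simpa using hlen)
    refine ⟨d + 1, x, y, fun k hk => ?_, hx, hy, hxy⟩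
    cases k with
    | zero => rfl
    | succ k => exact hagree k (by omega)

theorem IsConjWord.length_eq {v c : List α} (h : IsConjWord v c) : c.length = v.length := by
  obtain ⟨s, t, rfl, rfl⟩ := h
  simp [Nat.add_comm]

namespace IsLyndonWrt

variable {r : α → α → Prop} {v : List α}

theorem exists_rel_shift (hv : IsLyndonWrt r v) {q : ℕ} (hq : 0 < q) (hqv : q < v.length) :
    ∃ (d : ℕ) (x y : α),
      (∀ k < d, v[k]? = v[k + q]?) ∧ v[d]? = some x ∧ v[d + q]? = some y ∧ r x y := by
  have hlen : (v.drop q).length < v.length := by rw [length_drop]; omega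
  have hlex := hv.2 (v.drop q) (drop_suffix q v) (fun h => by simp [h] at hlen)
    (fun h => by have := congrArg length h; simp at this; omega)
  obtain ⟨d, x, y, hagree, hx, hy, hxy⟩ := hlex.exists_rel_of_length_le hlen.le
  refine ⟨d, x, y, fun k hk => ?_, hx, ?_, hxy⟩
  · rw [hagree k hk, getElem?_drop, Nat.add_comm]
  · rwa [getElem?_drop, Nat.add_comm] at hy

theorem length_le_of_hasPeriodLen [Std.Irrefl r] (hv : IsLyndonWrt r v) {q : ℕ}
    (hq : HasPeriodLen v q) : v.length ≤ q := by
  by_contra! hlt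
  obtain ⟨d, x, y, -, hx, hy, hxy⟩ := hv.exists_rel_shift hq.1 hlt
  rw [hq.2 d (List.getElem?_eq_some_iff.1 hy).1, hy, Option.some_inj] at hx
  exact irrefl x (hx ▸ hxy)

theorem not_rel_head [Std.Asymm r] (hv : IsLyndonWrt r v) {m : ℕ} {x y : α}
    (hx : v[0]? = some x) (hy : v[m]? = some y) : ¬ r y x := by
  rcases Nat.eq_zero_or_pos m with rfl | hm
  · rw [hx, Option.some_inj] at hy
    exact hy ▸ irrefl x
  obtain ⟨d, x', y', hagree, hx', hy', hxy'⟩ :=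
    hv.exists_rel_shift hm (List.getElem?_eq_some_iff.1 hy).1
  rcases Nat.eq_zero_or_pos d with rfl | hd
  · rw [hx, Option.some_inj] at hx'
    rw [Nat.zero_add, hy, Option.some_inj] at hy'
    exact hx' ▸ hy' ▸ asymm hxy'
  · have := hagree 0 hd
    rw [hx, Nat.zero_add, hy, Option.some_inj] at this
    exact this ▸ irrefl x

/-- Head-minimality for `r` and for its reverse forces the common prefix to be constant. -/
theorem length_le_one_of_isPrefix [Std.Asymm r] [Std.Trichotomous r] {u : List α}
    (hu : IsLyndonWrt r u) (hv : IsLyndonWrt (Function.swap r) v) (huv : u <+: v) :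
    u.length ≤ 1 := by
  obtain ⟨t, rfl⟩ := huv
  have hconst : ∀ m < u.length, u[m]? = u[0]? := by
    intro m hm
    have hx : u[0]? = some u[0] := getElem?_eq_getElem (by omega)
    have hy : u[m]? = some u[m] := getElem?_eq_getElem hm
    rw [hx, hy, Std.Trichotomous.trichotomous _ _ (hu.not_rel_head hx hy)
      (hv.not_rel_head (by rwa [getElem?_append_left (by omega)])
        (by rwa [getElem?_append_left hm]))]
  exact hu.length_le_of_hasPeriodLen
    ⟨le_rfl, fun k hk => by rw [hconst k (by omega), hconst (k + 1) hk]⟩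

end IsLyndonWrt

theorem factor_length (w : List α) (i j : ℕ) :
    (factor w i j).length = min (j - i + 1) (w.length - i) := by
  simp [factor]

theorem factor_getElem? (w : List α) {i j k : ℕ} (hk : k < j - i + 1) :
    (factor w i j)[k]? = w[i + k]? := by
  simp [factor, hk, getElem?_drop]

theorem hasPeriodLen_factor_iff {w : List α} {i j p : ℕ} (hj : j < w.length) :
    HasPeriodLen (factor w i j) p ↔ 1 ≤ p ∧ ∀ k, i ≤ k → k + p ≤ j → w[k]? = w[k + p]? := by
  unfold HasPeriodLen
  rw [factor_length]
  refine and_congr_right fun hp => ⟨fun h k hik hkj => ?_, fun h k hk => ?_⟩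
  · have := h (k - i) (by omega)
    rwa [factor_getElem? w (by omega), factor_getElem? w (by omega),
      Nat.add_sub_cancel' hik, ← Nat.add_assoc, Nat.add_sub_cancel' hik] at this
  · rw [factor_getElem? w (by omega), factor_getElem? w (by omega), ← Nat.add_assoc]
    exact h (i + k) (by omega) (by omega)

theorem hasPeriodLen_minPeriod (u : List α) : HasPeriodLen u (minPeriod u) :=
  Nat.sInf_mem (s := {p | HasPeriodLen u p}) ⟨u.length + 1, by omega, fun _ _ => by omega⟩

theorem minPeriod_le {u : List α} {p : ℕ} (h : HasPeriodLen u p) : minPeriod u ≤ p :=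
  Nat.sInf_le h

theorem one_le_minPeriod (u : List α) : 1 ≤ minPeriod u :=
  (hasPeriodLen_minPeriod u).1

theorem factor_self (w : List α) (x : ℕ) : factor w x x = w[x]?.toList := by
  rcases lt_or_ge x w.length with hx | hx
  · simp [factor, take_one_drop_eq_of_lt_length hx, getElem?_eq_getElem hx]
  · simp [factor, drop_eq_nil_of_le hx, getElem?_eq_none hx]

namespace IsRun

variable {w : List α} {i j : ℕ}

theorem getElem?_add_minPeriod (h : IsRun w i j) {k : ℕ} (hik : i ≤ k)
    (hkj : k + minPeriod (factor w i j) ≤ j) :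
    w[k]? = w[k + minPeriod (factor w i j)]? :=
  ((hasPeriodLen_factor_iff h.2.1).1 (hasPeriodLen_minPeriod _)).2 k hik hkj

theorem getElem?_pred_ne (h : IsRun w i j) (hi : 0 < i) :
    w[i - 1]? ≠ w[i - 1 + minPeriod (factor w i j)]? := by
  intro heq
  have hper : HasPeriodLen (factor w (i - 1) j) (minPeriod (factor w i j)) := by
    refine (hasPeriodLen_factor_iff h.2.1).2 ⟨one_le_minPeriod _, fun k hik hkj => ?_⟩
    obtain rfl | hik := (show k = i - 1 ∨ i ≤ k by omega)
    · exact heq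
    · exact h.getElem?_add_minPeriod hik hkj
  exact (h.2.2.2.1 hi).not_ge (minPeriod_le hper)

theorem getElem?_succ_ne (h : IsRun w i j) (hj : j + 1 < w.length) :
    w[j + 1 - minPeriod (factor w i j)]? ≠ w[j + 1]? := by
  intro heq
  have hper : HasPeriodLen (factor w i (j + 1)) (minPeriod (factor w i j)) := by
    refine (hasPeriodLen_factor_iff hj).2 ⟨one_le_minPeriod _, fun k hik hkj => ?_⟩
    obtain hk | hkj := (show k + minPeriod (factor w i j) = j + 1 ∨
      k + minPeriod (factor w i j) ≤ j by omega)
    · rwa [hk, show k = j + 1 - minPeriod (factor w i j) by omega]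
    · exact h.getElem?_add_minPeriod hik hkj
  exact (h.2.2.2.2 hj).not_ge (minPeriod_le hper)

theorem le_and_le_of_minPeriod_eq {i' j' a : ℕ} (h : IsRun w i j) (h' : IsRun w i' j')
    (hp : minPeriod (factor w i j) = minPeriod (factor w i' j'))
    (hia : i ≤ a) (hja : a + minPeriod (factor w i j) ≤ j + 1)
    (hia' : i' ≤ a) (hja' : a + minPeriod (factor w i j) ≤ j' + 1) : i ≤ i' ∧ j' ≤ j := by
  have hj' := h'.2.1
  constructor
  · by_contra! hlt
    exact h.getElem?_pred_ne (by omega) (hp ▸ h'.getElem?_add_minPeriod (by omega) (by omega))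
  · by_contra! hlt
    have := h'.getElem?_add_minPeriod (k := j + 1 - minPeriod (factor w i j)) (by omega)
      (by omega)
    rw [← hp, Nat.sub_add_cancel (by omega)] at this
    exact h.getElem?_succ_ne (by omega) this

theorem eq_of_minPeriod_eq {i' j' a : ℕ} (h : IsRun w i j) (h' : IsRun w i' j')
    (hp : minPeriod (factor w i j) = minPeriod (factor w i' j'))
    (hia : i ≤ a) (hja : a + minPeriod (factor w i j) ≤ j + 1)
    (hia' : i' ≤ a) (hja' : a + minPeriod (factor w i j) ≤ j' + 1) : i = i' ∧ j = j' := by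
  have := h.le_and_le_of_minPeriod_eq h' hp hia hja hia' hja'
  have := h'.le_and_le_of_minPeriod_eq h hp.symm hia' (hp ▸ hja') hia (hp ▸ hja)
  omega

/-- The first mismatch of the Lyndon factor with its own shift by the period can only be the one
ending the run, and `hexit` gives that one the wrong orientation. -/
theorem length_factor_le_minPeriod {r : α → α → Prop} [Std.Asymm r] {a b : ℕ}
    (h : IsRun w i j)
    (hexit : ∀ x y, w[j + 1]? = some x → w[j + 1 - minPeriod (factor w i j)]? = some y → r x y)
    (hia : i ≤ a) (haj : a + minPeriod (factor w i j) ≤ j + 1)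
    (hL : IsLyndonWrt r (factor w a b)) : (factor w a b).length ≤ minPeriod (factor w i j) := by
  set p := minPeriod (factor w i j)
  have hj := h.2.1
  by_contra! hlt
  obtain ⟨d, x, y, hagree, hx, hy, hxy⟩ := hL.exists_rel_shift (one_le_minPeriod _) hlt
  have hd := (List.getElem?_eq_some_iff.1 hy).1
  have hget : ∀ k < (factor w a b).length, (factor w a b)[k]? = w[a + k]? := fun k hk =>
    factor_getElem? w (by rw [factor_length] at hk; omega)
  have hlen : a + (factor w a b).length ≤ w.length := by rw [factor_length]; omega
  rw [hget d (by omega)] at hx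
  rw [hget (d + p) hd, ← Nat.add_assoc] at hy
  obtain hlt' | heq | hgt := lt_trichotomy (a + d + p) (j + 1)
  · rw [← h.getElem?_add_minPeriod (by omega) (by omega), hx, Option.some_inj] at hy
    obtain rfl := hy
    exact irrefl x hxy
  · rw [show a + d = j + 1 - p by omega] at hx
    rw [heq] at hy
    exact asymm hxy (hexit y x hy hx)
  · have := hagree (j + 1 - p - a) (by omega)
    rw [hget _ (by omega), hget _ (by omega), show a + (j + 1 - p - a) = j + 1 - p by omega,
      show a + (j + 1 - p - a + p) = j + 1 by omega] at this
    have hz : w[j + 1]? = some w[j + 1] := getElem?_eq_getElem (by omega)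
    exact irrefl _ (hexit _ _ hz (this.trans hz))

end IsRun

def IsBlockStart (w : List α) (x : ℕ) : Prop :=
  x + 1 < w.length ∧ w[x]? = w[x + 1]? ∧ (0 < x → w[x - 1]? ≠ w[x]?)

theorem IsBlockStart.not_succ {w : List α} {x : ℕ} (h : IsBlockStart w x) :
    ¬ IsBlockStart w (x + 1) :=
  fun h' => h'.2.2 x.succ_pos h.2.1

section Lroot

variable [LinearOrder α]

open Classical in
noncomputable def lrootOrder (w : List α) (i j : ℕ) : α → α → Prop :=
  if UseOrd (· < ·) w i j then (· < ·) else (· > ·)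

instance (w : List α) (i j : ℕ) : Std.Asymm (lrootOrder w i j) := by
  unfold lrootOrder; split <;> infer_instance

instance (w : List α) (i j : ℕ) : Std.Trichotomous (lrootOrder w i j) := by
  unfold lrootOrder; split <;> infer_instance

variable {w : List α} {i j i' j' a b b' : ℕ}

theorem lrootOrder_congr (h : UseOrd (· < ·) w i j ↔ UseOrd (· < ·) w i' j') :
    lrootOrder w i j = lrootOrder w i' j' := by
  unfold lrootOrder
  split_ifs <;> first | rfl | tauto

theorem lrootOrder_eq_swap (h : ¬ (UseOrd (· < ·) w i j ↔ UseOrd (· < ·) w i' j')) :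
    lrootOrder w i' j' = Function.swap (lrootOrder w i j) := by
  unfold lrootOrder
  split_ifs <;> first | rfl | tauto

theorem IsRun.lrootOrder_of_getElem? (h : IsRun w i j) {x y : α} (hx : w[j + 1]? = some x)
    (hy : w[j + 1 - minPeriod (factor w i j)]? = some y) : lrootOrder w i j x y := by
  have hj : j + 1 < w.length := (List.getElem?_eq_some_iff.1 hx).1
  unfold lrootOrder
  split_ifs with huse
  · obtain hend | ⟨x', y', hx', hy', hlt⟩ := huse
    · omega
    · rw [hx, Option.some_inj] at hx'
      rw [hy, Option.some_inj] at hy'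
      exact hx' ▸ hy' ▸ hlt
  · have hne : x ≠ y := fun hxy => h.getElem?_succ_ne hj (by rw [hx, hy, hxy])
    exact lt_of_le_of_ne (not_lt.1 fun hlt => huse (Or.inr ⟨x, y, hx, hy, hlt⟩)) hne.symm

namespace IsLroot

theorem bounds (h : IsLroot w i j a b) :
    i ≤ a ∧ b ≤ j ∧ b + 1 = a + minPeriod (factor w i j) := by
  obtain ⟨hrun, v, hord, hia, hbj, hlen, -, -⟩ := h
  have hconj : IsConjWord (factor w i (i + minPeriod (factor w i j) - 1)) v := by
    rcases hord with ⟨-, -, hc⟩ | ⟨-, -, hc⟩ <;> exact hc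
  rw [hconj.length_eq, factor_length] at hlen
  have := hrun.2.1
  have := hrun.2.2.1
  have := one_le_minPeriod (factor w i j)
  exact ⟨hia, hbj, by omega⟩

theorem start_le_finish (h : IsLroot w i j a b) : a ≤ b := by
  have := h.bounds.2.2
  have := one_le_minPeriod (factor w i j)
  omega

theorem isLyndonWrt (h : IsLroot w i j a b) : IsLyndonWrt (lrootOrder w i j) (factor w a b) := by
  obtain ⟨-, v, hord, -, -, -, rfl, -⟩ := h
  unfold lrootOrder
  rcases hord with ⟨huse, hL, -⟩ | ⟨huse, hL, -⟩
  · rwa [if_pos huse]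
  · rwa [if_neg huse]

theorem factor_ne (h : IsLroot w i j a b) {a' : ℕ} (hia' : i ≤ a') (ha' : a' < a) :
    factor w a' (a' + (b - a)) ≠ factor w a b := by
  have hab := h.bounds.2.2
  have := one_le_minPeriod (factor w i j)
  obtain ⟨-, v, -, -, -, hlen, rfl, hmin⟩ := h
  rw [show a' + (b - a) = a' + (factor w a b).length - 1 by omega]
  exact hmin a' hia' ha'

theorem run_eq (h : IsLroot w i j a b) (h' : IsLroot w i' j' a b) : i = i' ∧ j = j' := by
  obtain ⟨hia, hbj, hab⟩ := h.bounds
  obtain ⟨hia', hbj', hab'⟩ := h'.bounds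
  exact h.1.eq_of_minPeriod_eq h'.1 (by omega) hia (by omega) hia' (by omega)

theorem finish_le_of_start_eq (h : IsLroot w i j a b) (h' : IsLroot w i' j' a b')
    (huse : UseOrd (· < ·) w i j ↔ UseOrd (· < ·) w i' j') : b' ≤ b := by
  obtain ⟨hia, hbj, hab⟩ := h.bounds
  obtain ⟨hia', hbj', hab'⟩ := h'.bounds
  have := h.1.length_factor_le_minPeriod (fun _ _ => h.1.lrootOrder_of_getElem?) hia (by omega)
    (lrootOrder_congr huse ▸ h'.isLyndonWrt)
  rw [factor_length] at this
  have := h'.1.2.1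
  omega

theorem run_eq_of_start_eq (h : IsLroot w i j a b) (h' : IsLroot w i' j' a b')
    (huse : UseOrd (· < ·) w i j ↔ UseOrd (· < ·) w i' j') : i = i' ∧ j = j' := by
  obtain rfl :=
    le_antisymm (h'.finish_le_of_start_eq h huse.symm) (h.finish_le_of_start_eq h' huse)
  exact h.run_eq h'

theorem finish_eq_start_of_start_eq (h : IsLroot w i j a b) (h' : IsLroot w i' j' a b')
    (huse : ¬ (UseOrd (· < ·) w i j ↔ UseOrd (· < ·) w i' j')) (hb : b ≤ b') : b = a := by
  have hlen := h.isLyndonWrt.length_le_one_of_isPrefix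
    (lrootOrder_eq_swap huse ▸ h'.isLyndonWrt) (take_prefix_take_left (by omega))
  obtain ⟨hia, hbj, hab⟩ := h.bounds
  have := h.1.2.1
  have := one_le_minPeriod (factor w i j)
  rw [factor_length] at hlen
  omega

theorem isBlockStart (h : IsLroot w i j a a) : IsBlockStart w a := by
  obtain ⟨hia, haj, hp⟩ := h.bounds
  replace hp : minPeriod (factor w i j) = 1 := by omega
  have hrun := h.1
  have hai : a = i := by
    by_contra hne
    refine h.factor_ne (a' := a - 1) (by omega) (by omega) ?_
    have := hrun.getElem?_add_minPeriod (k := a - 1) (by omega) (by omega)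
    rw [hp, Nat.sub_add_cancel (by omega)] at this
    rw [Nat.sub_self, Nat.add_zero, factor_self, factor_self, this]
  subst hai
  have := hrun.1
  have := hrun.2.1
  refine ⟨by omega, hp ▸ hrun.getElem?_add_minPeriod le_rfl (by omega), fun ha => ?_⟩
  have := hrun.getElem?_pred_ne ha
  rwa [hp, Nat.sub_add_cancel ha] at this

theorem isBlockStart_of_start_eq (h : IsLroot w i j a b) (h' : IsLroot w i' j' a b')
    (huse : ¬ (UseOrd (· < ·) w i j ↔ UseOrd (· < ·) w i' j')) :
    IsBlockStart w a ∧ (a < b ∨ a < b') := by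
  wlog hb : b ≤ b' generalizing i j b i' j' b'
  · exact (this h' h (fun e => huse e.symm) (by omega)).imp_right Or.symm
  obtain rfl := h.finish_eq_start_of_start_eq h' huse hb
  refine ⟨h.isBlockStart, Or.inr (lt_of_le_of_ne hb fun hab => huse ?_)⟩
  subst hab
  obtain ⟨rfl, rfl⟩ := h.run_eq h'
  rfl

end IsLroot

theorem two_mul_card_le_of_isLroot {F : Finset (ℕ × ℕ)} {start finish : ℕ × ℕ → ℕ} {s ℓ : ℕ}
    (hroot : ∀ ij ∈ F, IsLroot w ij.1 ij.2 (start ij) (finish ij))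
    (hwin : ∀ ij ∈ F, s ≤ start ij ∧ finish ij < s + ℓ) : 2 * F.card ≤ 3 * ℓ := by
  classical
  set A := {ij ∈ F | UseOrd (· < ·) w ij.1 ij.2}.image start
  set B := {ij ∈ F | ¬ UseOrd (· < ·) w ij.1 ij.2}.image start
  have hsub (P : ℕ × ℕ → Prop) [DecidablePred P] :
      {ij ∈ F | P ij}.image start ⊆ Finset.Ico s (s + ℓ) := by
    refine Finset.image_subset_iff.2 fun ij h => ?_
    obtain ⟨hij, -⟩ := Finset.mem_filter.1 h
    exact Finset.mem_Ico.2
      ⟨(hwin ij hij).1, (hroot ij hij).start_le_finish.trans_lt (hwin ij hij).2⟩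
  have hblock : ∀ x ∈ A ∩ B, IsBlockStart w x ∧ x + 1 ∈ Finset.Ico s (s + ℓ) := by
    intro x hx
    simp only [A, B, Finset.mem_inter, Finset.mem_image, Finset.mem_filter] at hx
    obtain ⟨⟨u, ⟨hu, hu'⟩, rfl⟩, ⟨v, ⟨hv, hv'⟩, hx⟩⟩ := hx
    obtain ⟨hblock, hlt⟩ := (hroot u hu).isBlockStart_of_start_eq (hx ▸ hroot v hv) (by tauto)
    have := hwin u hu
    have := hwin v hv
    exact ⟨hblock, Finset.mem_Ico.2 ⟨by omega, by omega⟩⟩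
  have hinj : ∀ u ∈ F, ∀ v ∈ F, (UseOrd (· < ·) w u.1 u.2 ↔ UseOrd (· < ·) w v.1 v.2) →
      start u = start v → u = v := fun u hu v hv huse huv =>
    Prod.ext_iff.2 ((hroot u hu).run_eq_of_start_eq (huv ▸ hroot v hv) huse)
  rw [F.card_eq_card_image_filter_add_card_image_filter_not _ hinj]
  simpa using Finset.two_mul_card_add_card_le (hsub _) (hsub _)
    fun x hx => ⟨(hblock x hx).2, fun h => (hblock x hx).1.not_succ (hblock _ h).1⟩

end Lroot

end

/-- Any interval of positions of length `ℓ` contains at most `3ℓ/2` Lroots of runs. -/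
theorem lroots_in_interval_le {α : Type u} [LinearOrder α] (w : List α) (s ℓ : ℕ) :
    2 * {ij : ℕ × ℕ | ∃ a b, IsLroot w ij.1 ij.2 a b ∧ s ≤ a ∧ b < s + ℓ}.ncard ≤
      3 * ℓ := by
  set S := {ij : ℕ × ℕ | ∃ a b, IsLroot w ij.1 ij.2 a b ∧ s ≤ a ∧ b < s + ℓ}
  have hS : S.Finite := ((Set.finite_lt_nat w.length).prod (Set.finite_lt_nat w.length)).subset
    fun ij ⟨_, _, h, _⟩ => ⟨h.1.1.trans h.1.2.1, h.1.2.1⟩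
  choose! start finish hroot hs hfinish using fun ij (hij : ij ∈ S) => hij
  rw [Set.ncard_eq_toFinset_card S hS]
  exact two_mul_card_le_of_isLroot (fun ij h => hroot ij (hS.mem_toFinset.1 h))
    fun ij h => ⟨hs ij (hS.mem_toFinset.1 h), hfinish ij (hS.mem_toFinset.1 h)⟩
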